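/- arXiv:1809.00056 — 3 statements merged into one kernel-verified Lean document; each statement's English description precedes it below -/
import Mathlib

section
/- Let W be an m×m complex Hermitian positive definite matrix and let P, P_T > 0 with P_T < m·P. Then the function f(λ) = Σᵢ min(P, 1/λ − (W⁻¹)ᵢᵢ), defined for λ > 0, is continuous and non-increasing, and the equation f(λ) = P_T has a unique solution λ > 0. Moreover, if in addition P_T > m/λ_min(W) − tr(W⁻¹), then this solution satisfies λ < λ_min(W). -/
open Matrix ComplexOrder

noncomputable def mutualInfo {m : ℕ} (W R : Matrix (Fin m) (Fin m) ℂ) : ℝ :=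
  Real.log ((1 + W * R).det.re)

def jointSet (m : ℕ) (PT P : ℝ) : Set (Matrix (Fin m) (Fin m) ℂ) :=
  {R | R.PosSemidef ∧ R.trace.re ≤ PT ∧ ∀ i, (R i i).re ≤ P}

noncomputable def lamMin {m : ℕ} {W : Matrix (Fin m) (Fin m) ℂ} (hW : W.IsHermitian) : ℝ :=
  sInf (Set.range hW.eigenvalues)

/-!
Write `f(λ) = Σᵢ min(P, 1/λ − cᵢ)` with `cᵢ = (W⁻¹)ᵢᵢ`. Every summand is continuous and
non-increasing in `λ`, and a summand below its cap `P` is strictly decreasing, so `f` strictly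
decreases wherever `f < m·P`. Since `f = m·P` near `0` and `f ≤ m/λ − tr(W⁻¹) → −tr(W⁻¹) ≤ 0 < P_T`
at infinity, the intermediate value theorem gives exactly one root of `f = P_T`. The same bound
`P_T = f(λ) ≤ m/λ − tr(W⁻¹)` compared with `m/λ_min − tr(W⁻¹) < P_T` yields `λ < λ_min`.
-/

open Filter Set Topology

section CappedWaterFill

variable {ι : Type*} [Fintype ι] (P : ℝ) (c : ι → ℝ)

/-- Total power of water filling at level `1/λ` with noise levels `c` and per-stream cap `P`. -/
noncomputable def cappedWaterFill (lam : ℝ) : ℝ :=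
  ∑ i, min P (1 / lam - c i)

theorem continuousOn_cappedWaterFill : ContinuousOn (cappedWaterFill P c) (Ioi 0) :=
  continuousOn_finsetSum _ fun _ _ => continuousOn_const.inf
    ((continuousOn_const.div continuousOn_id fun _ hx => ne_of_gt hx).sub continuousOn_const)

theorem antitoneOn_cappedWaterFill : AntitoneOn (cappedWaterFill P c) (Ioi 0) :=
  fun _ hx _ _ hxy => Finset.sum_le_sum fun _ _ =>
    min_le_min_left _ (sub_le_sub_right (one_div_le_one_div_of_le hx hxy) _)

theorem cappedWaterFill_le (lam : ℝ) :
    cappedWaterFill P c lam ≤ Fintype.card ι / lam - ∑ i, c i := calc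
  cappedWaterFill P c lam ≤ ∑ i, (1 / lam - c i) := Finset.sum_le_sum fun _ _ => min_le_right _ _
  _ = Fintype.card ι / lam - ∑ i, c i := by
    rw [Finset.sum_sub_distrib, Finset.sum_const, Finset.card_univ, nsmul_eq_mul, mul_one_div]

theorem cappedWaterFill_eq_card_mul {lam : ℝ} (h : ∀ i, P + c i ≤ 1 / lam) :
    cappedWaterFill P c lam = Fintype.card ι * P := by
  rw [cappedWaterFill, Finset.sum_congr rfl fun i _ => min_eq_left (le_sub_iff_add_le.2 (h i)),
    Finset.sum_const, Finset.card_univ, nsmul_eq_mul]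

theorem cappedWaterFill_lt_of_lt {x y : ℝ} (hx : 0 < x) (hxy : x < y)
    (hcap : cappedWaterFill P c x < Fintype.card ι * P) :
    cappedWaterFill P c y < cappedWaterFill P c x := by
  obtain ⟨i, hi⟩ : ∃ i, 1 / x - c i < P := by
    by_contra! h
    exact hcap.ne (cappedWaterFill_eq_card_mul P c fun i => by linarith [h i])
  refine Finset.sum_lt_sum
    (fun _ _ => min_le_min_left _ (sub_le_sub_right (one_div_le_one_div_of_le hx hxy.le) _))
    ⟨i, Finset.mem_univ i, ?_⟩
  rw [min_eq_right hi.le]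
  exact (min_le_right _ _).trans_lt (sub_lt_sub_right (one_div_lt_one_div_of_lt hx hxy) _)

theorem eventually_cappedWaterFill_eq_card_mul :
    ∀ᶠ lam in 𝓝[>] 0, cappedWaterFill P c lam = Fintype.card ι * P := by
  obtain ⟨M, hM⟩ := (Set.finite_range c).bddAbove
  filter_upwards [tendsto_inv_nhdsGT_zero.eventually_ge_atTop (P + M)] with lam hlam
  exact cappedWaterFill_eq_card_mul P c fun i => by
    rw [one_div]; linarith [hM (Set.mem_range_self i)]

theorem eventually_cappedWaterFill_lt {PT : ℝ} (hPT : -∑ i, c i < PT) :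
    ∀ᶠ lam in atTop, cappedWaterFill P c lam < PT := by
  have hlim : Tendsto (fun lam : ℝ => Fintype.card ι / lam - ∑ i, c i) atTop (𝓝 (-∑ i, c i)) := by
    simpa using (tendsto_const_nhds.div_atTop tendsto_id).sub_const (∑ i, c i)
  filter_upwards [hlim.eventually (gt_mem_nhds hPT)] with lam hlam
  exact (cappedWaterFill_le P c lam).trans_lt hlam

theorem existsUnique_cappedWaterFill_eq {PT : ℝ} (hPT : -∑ i, c i < PT)
    (hPTcap : PT < Fintype.card ι * P) :
    ∃! lam, 0 < lam ∧ cappedWaterFill P c lam = PT := by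
  obtain ⟨b, hfb, hb⟩ :=
    ((eventually_cappedWaterFill_lt P c hPT).and (eventually_gt_atTop 0)).exists
  obtain ⟨a, hfa, hab⟩ :=
    ((eventually_cappedWaterFill_eq_card_mul P c).and (Ioo_mem_nhdsGT hb)).exists
  obtain ⟨lam, hlam, hflam⟩ := intermediate_value_Icc' hab.2.le
    ((continuousOn_cappedWaterFill P c).mono fun x hx => hab.1.trans_le hx.1)
    ⟨hfb.le, hfa ▸ hPTcap.le⟩
  have hroot_lt : ∀ x y, 0 < x → cappedWaterFill P c x = PT → x < y →
      cappedWaterFill P c y ≠ PT := fun x y hx hfx hxy =>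
    ((cappedWaterFill_lt_of_lt P c hx hxy (hfx ▸ hPTcap)).trans_eq hfx).ne
  refine ⟨lam, ⟨hab.1.trans_le hlam.1, hflam⟩, fun y ⟨hy, hfy⟩ => ?_⟩
  rcases lt_trichotomy y lam with h | h | h
  · exact absurd hflam (hroot_lt y lam hy hfy h)
  · exact h
  · exact absurd hfy (hroot_lt lam y (hab.1.trans_le hlam.1) hflam h)

theorem lt_of_cappedWaterFill_eq {PT lam μ : ℝ} (hμ : 0 < μ) (hlam : 0 < lam)
    (hgap : Fintype.card ι / μ - ∑ i, c i < PT) (hroot : cappedWaterFill P c lam = PT) :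
    lam < μ := by
  have hdiv : (Fintype.card ι : ℝ) / μ < Fintype.card ι / lam := by
    linarith [cappedWaterFill_le P c lam]
  have hcard : (0 : ℝ) < Fintype.card ι :=
    (Nat.cast_nonneg _).lt_of_ne fun h => by simp [← h] at hdiv
  exact (div_lt_div_iff_of_pos_left hcard hμ hlam).1 hdiv

end CappedWaterFill

theorem lamMin_pos {m : ℕ} {W : Matrix (Fin m) (Fin m) ℂ} (hW : W.PosDef) (hm : 0 < m) :
    0 < lamMin hW.1 := by
  obtain ⟨j, hj⟩ := (Set.range_nonempty hW.1.eigenvalues (h := ⟨⟨0, hm⟩⟩)).csInf_mem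
    (Set.finite_range _)
  rw [lamMin, ← hj]
  exact hW.eigenvalues_pos j

theorem stmt3_general (m : ℕ) (hm : 1 ≤ m) (W : Matrix (Fin m) (Fin m) ℂ) (hW : W.PosDef)
    (P PT : ℝ) (hPT : 0 < PT) (hPTm : PT < m * P) :
    ContinuousOn (fun lam : ℝ => ∑ i, min P (1 / lam - (W⁻¹ i i).re)) (Set.Ioi 0) ∧
    AntitoneOn (fun lam : ℝ => ∑ i, min P (1 / lam - (W⁻¹ i i).re)) (Set.Ioi 0) ∧
    (∃! lam : ℝ, 0 < lam ∧ ∑ i, min P (1 / lam - (W⁻¹ i i).re) = PT) ∧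
    (m / lamMin hW.1 - (W⁻¹).trace.re < PT →
      ∀ lam : ℝ, 0 < lam → ∑ i, min P (1 / lam - (W⁻¹ i i).re) = PT →
        lam < lamMin hW.1) := by
  set c : Fin m → ℝ := fun i => (W⁻¹ i i).re
  have htrace : ∑ i, c i = (W⁻¹).trace.re := by simp [c, Matrix.trace, Complex.re_sum]
  have htrace_nonneg : 0 ≤ (W⁻¹).trace.re :=
    (Complex.nonneg_iff.1 hW.inv.posSemidef.trace_nonneg).1
  rw [← Fintype.card_fin m] at hPTm
  refine ⟨continuousOn_cappedWaterFill P c, antitoneOn_cappedWaterFill P c,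
    existsUnique_cappedWaterFill_eq P c (by linarith) hPTm, fun hgap lam hlam hroot => ?_⟩
  exact lt_of_cappedWaterFill_eq P c (lamMin_pos hW hm) hlam
    (by rwa [Fintype.card_fin, htrace]) hroot

/-- The function `f(λ) = Σᵢ min(P, 1/λ − (W⁻¹)ᵢᵢ)` is continuous and non-increasing
on `(0, ∞)`, the equation `f(λ) = P_T` has a unique solution `λ > 0` whenever
`0 < P_T < m·P`, and this solution is below `λ_min(W)` when
`P_T > m/λ_min(W) − tr(W⁻¹)`. -/
theorem stmt3 (m : ℕ) (hm : 1 ≤ m) (W : Matrix (Fin m) (Fin m) ℂ) (hW : W.PosDef)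
    (P PT : ℝ) (hP : 0 < P) (hPT : 0 < PT) (hPTm : PT < m * P) :
    ContinuousOn (fun lam : ℝ => ∑ i, min P (1 / lam - (W⁻¹ i i).re)) (Set.Ioi 0) ∧
    AntitoneOn (fun lam : ℝ => ∑ i, min P (1 / lam - (W⁻¹ i i).re)) (Set.Ioi 0) ∧
    (∃! lam : ℝ, 0 < lam ∧ ∑ i, min P (1 / lam - (W⁻¹ i i).re) = PT) ∧
    (m / lamMin hW.1 - (W⁻¹).trace.re < PT →
      ∀ lam : ℝ, 0 < lam → ∑ i, min P (1 / lam - (W⁻¹ i i).re) = PT →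
        lam < lamMin hW.1) :=
  stmt3_general m hm W hW P PT hPT hPTm
end

section
/- Let W be an m×m complex Hermitian positive definite matrix and P, P_T > 0. If R* is a positive definite matrix in the joint constraint set S(P_T, P) that maximizes log det(I + W·R) over S(P_T, P), then the largest eigenvalue of the off-diagonal part of W⁻¹ satisfies λ_max(D̄(W⁻¹)) < P; equivalently, P·I − D̄(W⁻¹) is positive definite. Moreover, if m·P ≤ P_T, this condition is also sufficient for the existence of a positive definite maximizer, namely R* = P·I − D̄(W⁻¹). -/
/-!
Write `S = W⁻¹ + R`. Since `det (1 + W R) = det W · det S`, maximizing the mutual information means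
maximizing `det S`.

Sufficiency: `W⁻¹ + (P I - D̄(W⁻¹))` is the diagonal matrix with entries `(W⁻¹)ᵢᵢ + P`, while
for every feasible `R` Hadamard's inequality gives `det S ≤ ∏ Sᵢᵢ ≤ ∏ ((W⁻¹)ᵢᵢ + P)`.

Necessity: a positive definite maximizer `R` stays feasible under small perturbations `R + tΔ`
by Hermitian `Δ` with zero diagonal. The first variation of `det (S + tΔ)` is
`det S · tr (S⁻¹ Δ)`, and for `Δ` supported on the entries `(i, j), (j, i)` this is
`2 det S · |(S⁻¹)ᵢⱼ|²`. Hence `S⁻¹`, and with it `S`, is diagonal, so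
`P I - D̄(W⁻¹) = diag (P - Rᵢᵢ) + R` is positive definite.

Finally, `P I - A` is positive definite exactly when every eigenvalue of `A` is below `P`.
-/

open Matrix ComplexOrder

/-- The off-diagonal part `D̄(A) = A − D(A)` of a matrix. -/
def offDiag {m : ℕ} (A : Matrix (Fin m) (Fin m) ℂ) : Matrix (Fin m) (Fin m) ℂ :=
  fun i j => if i = j then 0 else A i j

/-- The largest eigenvalue of a Hermitian matrix. -/
noncomputable def lamMax {m : ℕ} {A : Matrix (Fin m) (Fin m) ℂ} (hA : A.IsHermitian) : ℝ :=
  sSup (Set.range hA.eigenvalues)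

open Filter Topology Unitary

namespace Matrix

theorem IsDiag.inv {n R : Type*} [Fintype n] [DecidableEq n] [CommRing R] {A : Matrix n n R}
    (hA : A.IsDiag) : A⁻¹.IsDiag := by
  rw [← hA.diagonal_diag, inv_diagonal]
  exact isDiag_diagonal _

variable {n 𝕜 : Type*} [Fintype n] [DecidableEq n] [RCLike 𝕜]

theorem IsHermitian.sub_smul_one_eq {A : Matrix n n 𝕜} (hA : A.IsHermitian) (r : ℝ) :
    A - (r : 𝕜) • 1 = conjStarAlgAut 𝕜 _ hA.eigenvectorUnitary
      (diagonal (RCLike.ofReal ∘ (hA.eigenvalues - fun _ => r))) := by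
  conv_lhs => rw [hA.spectral_theorem]
  rw [← map_one (conjStarAlgAut 𝕜 _ hA.eigenvectorUnitary), ← map_smul, ← map_sub]
  congr 1
  ext i j
  by_cases h : i = j <;> simp [h, Algebra.algebraMap_eq_smul_one]

theorem IsHermitian.posSemidef_sub_smul_one_iff {A : Matrix n n 𝕜} (hA : A.IsHermitian) (r : ℝ) :
    (A - (r : 𝕜) • 1).PosSemidef ↔ ∀ i, r ≤ hA.eigenvalues i := by
  rw [hA.sub_smul_one_eq]
  simp [conjStarAlgAut_apply, isUnit_coe.posSemidef_star_right_conjugate_iff]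

theorem IsHermitian.posDef_smul_one_sub_iff {A : Matrix n n 𝕜} (hA : A.IsHermitian) (r : ℝ) :
    ((r : 𝕜) • 1 - A).PosDef ↔ ∀ i, hA.eigenvalues i < r := by
  rw [← neg_sub, hA.sub_smul_one_eq, ← map_neg, diagonal_neg]
  simp [conjStarAlgAut_apply, isUnit_coe.posDef_star_right_conjugate_iff]

theorem PosDef.exists_pos_le_eigenvalues {A : Matrix n n 𝕜} (hA : A.PosDef) :
    ∃ c > 0, ∀ i, c ≤ hA.1.eigenvalues i := by
  cases isEmpty_or_nonempty n
  · exact ⟨1, one_pos, isEmptyElim⟩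
  · obtain ⟨i₀, hi₀⟩ := Finite.exists_min hA.1.eigenvalues
    exact ⟨_, hA.eigenvalues_pos i₀, hi₀⟩

theorem PosDef.eventually_posSemidef_add_smul {R Δ : Matrix n n 𝕜} (hR : R.PosDef)
    (hΔ : Δ.IsHermitian) : ∀ᶠ t : ℝ in 𝓝[>] 0, (R + (t : 𝕜) • Δ).PosSemidef := by
  obtain ⟨c, hc, hcR⟩ := hR.exists_pos_le_eigenvalues
  set k := ∑ i, |hΔ.eigenvalues i|
  have hk : 0 ≤ k := Finset.sum_nonneg fun i _ => abs_nonneg _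
  have hR' : (R - (c : 𝕜) • 1).PosSemidef := (hR.1.posSemidef_sub_smul_one_iff c).2 hcR
  have hΔ' : (Δ - ((-k : ℝ) : 𝕜) • 1).PosSemidef := (hΔ.posSemidef_sub_smul_one_iff _).2 fun i =>
    neg_le.2 <| (neg_le_abs _).trans
      (Finset.single_le_sum (fun j _ => abs_nonneg (hΔ.eigenvalues j)) (Finset.mem_univ i))
  have hsmall : ∀ᶠ t : ℝ in 𝓝[>] 0, t < c / (k + 1) :=
    nhdsWithin_le_nhds (eventually_lt_nhds (by positivity))
  filter_upwards [hsmall, self_mem_nhdsWithin] with t ht (ht0 : 0 < t)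
  have hck : 0 ≤ c - t * k := by
    rw [lt_div_iff₀ (by positivity)] at ht
    nlinarith
  have hdecomp : R + (t : 𝕜) • Δ =
      (R - (c : 𝕜) • 1) + (t : 𝕜) • (Δ - ((-k : ℝ) : 𝕜) • 1) + ((c - t * k : ℝ) : 𝕜) • 1 := by
    push_cast
    module
  rw [hdecomp]
  exact (hR'.add (hΔ'.smul (RCLike.ofReal_nonneg.2 ht0.le))).add
    (PosSemidef.one.smul (RCLike.ofReal_nonneg.2 hck))

theorem eventually_re_det_lt_re_det_add_smul {S Δ : Matrix n n 𝕜} (hS : IsUnit S.det)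
    (h : 0 < RCLike.re (S.det * (S⁻¹ * Δ).trace)) :
    ∀ᶠ t : ℝ in 𝓝[>] 0, RCLike.re S.det < RCLike.re (S + (t : 𝕜) • Δ).det := by
  obtain ⟨q, hq⟩ : ∃ q : Polynomial 𝕜, ∀ r : 𝕜,
      det (1 + r • (S⁻¹ * Δ)) = 1 + (S⁻¹ * Δ).trace * r + q.eval r * r ^ 2 :=
    ⟨_, fun r => det_one_add_smul r _⟩
  set g : ℝ → ℝ := fun t =>
    RCLike.re (S.det * (S⁻¹ * Δ).trace) + t * RCLike.re (S.det * q.eval (t : 𝕜))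
  have hdet : ∀ t : ℝ, RCLike.re (S + (t : 𝕜) • Δ).det = RCLike.re S.det + t * g t := by
    intro t
    have hfactor : S + (t : 𝕜) • Δ = S * (1 + (t : 𝕜) • (S⁻¹ * Δ)) := by
      rw [mul_add, mul_one, Matrix.mul_smul, ← Matrix.mul_assoc, mul_nonsing_inv _ hS,
        Matrix.one_mul]
    have hexpand : S.det * (1 + (S⁻¹ * Δ).trace * t + q.eval (t : 𝕜) * (t : 𝕜) ^ 2) =
        S.det + (t : 𝕜) * (S.det * (S⁻¹ * Δ).trace + (t : 𝕜) * (S.det * q.eval (t : 𝕜))) := by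
      ring
    rw [hfactor, det_mul, hq, hexpand, map_add, RCLike.re_ofReal_mul, map_add,
      RCLike.re_ofReal_mul]
  have hg : Continuous g := by
    have := q.continuous.comp RCLike.continuous_ofReal
    fun_prop
  have hpos : ∀ᶠ t in 𝓝[>] 0, 0 < g t :=
    nhdsWithin_le_nhds (hg.continuousAt.eventually (eventually_gt_nhds (by simpa [g] using h)))
  filter_upwards [hpos, self_mem_nhdsWithin] with t hgt (ht0 : 0 < t)
  rw [hdet]
  nlinarith [mul_pos ht0 hgt]

theorem PosSemidef.re_det_le_exp {A : Matrix n n 𝕜} (hA : A.PosSemidef) :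
    RCLike.re A.det ≤ Real.exp (RCLike.re A.trace - Fintype.card n) := by
  have hev := hA.eigenvalues_nonneg
  rw [hA.1.det_eq_prod_eigenvalues, hA.1.trace_eq_sum_eigenvalues, ← RCLike.ofReal_prod,
    ← RCLike.ofReal_sum, RCLike.ofReal_re, RCLike.ofReal_re]
  calc ∏ i, hA.1.eigenvalues i ≤ ∏ i, Real.exp (hA.1.eigenvalues i - 1) :=
        Finset.prod_le_prod (fun i _ => hev i)
          fun i _ => by linarith [Real.add_one_le_exp (hA.1.eigenvalues i - 1)]
    _ = Real.exp (∑ i, hA.1.eigenvalues i - Fintype.card n) := by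
        rw [← Real.exp_sum, Finset.sum_sub_distrib]; simp

/-- **Hadamard's inequality**. -/
theorem PosDef.re_det_le_prod_diag {A : Matrix n n 𝕜} (hA : A.PosDef) :
    RCLike.re A.det ≤ ∏ i, RCLike.re (A i i) := by
  set d : n → ℝ := fun i => RCLike.re (A i i)
  have hd : ∀ i, 0 < d i := fun i => (RCLike.pos_iff.mp hA.diag_pos).1
  -- rescale `A` to unit diagonal, where the previous bound reads `det ≤ 1`
  set E : Matrix n n 𝕜 := diagonal fun i => (((√(d i))⁻¹ : ℝ) : 𝕜)
  have hE : Eᴴ = E := by simp [E]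
  have hT := hA.posSemidef.conjTranspose_mul_mul_same E
  rw [hE] at hT
  have hTdiag : ∀ i, (E * A * E) i i = 1 := fun i => by
    have hsq : (√(d i))⁻¹ * d i * (√(d i))⁻¹ = 1 := by
      rw [mul_right_comm, ← mul_inv, Real.mul_self_sqrt (hd i).le, inv_mul_cancel₀ (hd i).ne']
    rw [mul_diagonal, diagonal_mul, ← hA.1.coe_re_apply_self i]
    exact_mod_cast hsq
  have htr : RCLike.re (E * A * E).trace = Fintype.card n := by
    simp [trace, hTdiag]
  have hdet : RCLike.re (E * A * E).det = (∏ i, d i)⁻¹ * RCLike.re A.det := by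
    have hc : (∏ i, (√(d i))⁻¹) * (∏ i, (√(d i))⁻¹) = (∏ i, d i)⁻¹ := by
      rw [← Finset.prod_mul_distrib, ← Finset.prod_inv_distrib]
      exact Finset.prod_congr rfl fun i _ => by rw [← mul_inv, Real.mul_self_sqrt (hd i).le]
    rw [det_mul, det_mul, det_diagonal, ← RCLike.ofReal_prod, mul_right_comm, ← RCLike.ofReal_mul,
      hc, RCLike.re_ofReal_mul]
  have h := hT.re_det_le_exp
  rw [htr, sub_self, Real.exp_zero, hdet] at h
  rwa [inv_mul_le_iff₀ (Finset.prod_pos fun i _ => hd i), mul_one] at h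

end Matrix

section
variable {m : ℕ}

theorem lamMax_lt_iff [NeZero m] {A : Matrix (Fin m) (Fin m) ℂ} (hA : A.IsHermitian) {r : ℝ} :
    lamMax hA < r ↔ ∀ i, hA.eigenvalues i < r := by
  rw [lamMax, Set.Finite.csSup_lt_iff (Set.finite_range _) (Set.range_nonempty _),
    Set.forall_mem_range]

theorem posDef_smul_one_sub_iff_lamMax_lt [NeZero m] {A : Matrix (Fin m) (Fin m) ℂ}
    (hA : A.IsHermitian) (r : ℝ) : ((r : ℂ) • 1 - A).PosDef ↔ lamMax hA < r := by
  rw [lamMax_lt_iff]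
  exact hA.posDef_smul_one_sub_iff r

theorem add_smul_one_sub_offDiag (A : Matrix (Fin m) (Fin m) ℂ) (r : ℂ) :
    A + (r • 1 - offDiag A) = diagonal fun i => A i i + r := by
  ext i j
  by_cases h : i = j
  · subst h; simp [offDiag]
  · simp [offDiag, h]

theorem smul_one_sub_offDiag_eq_of_isDiag {A R : Matrix (Fin m) (Fin m) ℂ} (h : (A + R).IsDiag)
    (r : ℂ) : r • 1 - offDiag A = diagonal (fun i => r - R i i) + R := by
  ext i j
  by_cases hij : i = j
  · subst hij; simp [offDiag]
  · simpa [offDiag, hij, neg_eq_iff_add_eq_zero] using h hij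

theorem mem_jointSet_of_diag_eq {PT P : ℝ} {R R' : Matrix (Fin m) (Fin m) ℂ}
    (hR : R ∈ jointSet m PT P) (hR' : R'.PosSemidef) (hdiag : ∀ i, R' i i = R i i) :
    R' ∈ jointSet m PT P := by
  have htrace : R'.trace = R.trace := by simp [trace, hdiag]
  exact ⟨hR', htrace ▸ hR.2.1, fun i => hdiag i ▸ hR.2.2 i⟩

theorem smul_one_sub_offDiag_mem_jointSet {PT P : ℝ} {A : Matrix (Fin m) (Fin m) ℂ}
    (hA : ((P : ℂ) • 1 - offDiag A).PosSemidef) (hmP : (m : ℝ) * P ≤ PT) :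
    (P : ℂ) • 1 - offDiag A ∈ jointSet m PT P := by
  refine ⟨hA, ?_, fun i => by simp [offDiag]⟩
  simpa [trace, offDiag, mul_comm] using hmP

variable {W : Matrix (Fin m) (Fin m) ℂ}

theorem mutualInfo_eq (hW : W.PosDef) {R : Matrix (Fin m) (Fin m) ℂ} (hR : R.PosSemidef) :
    mutualInfo W R = Real.log W.det.re + Real.log (W⁻¹ + R).det.re := by
  obtain ⟨a, ha, haW⟩ := RCLike.pos_iff_exists_ofReal.mp hW.det_pos
  obtain ⟨b, hb, hbS⟩ := RCLike.pos_iff_exists_ofReal.mp (hW.inv.add_posSemidef hR).det_pos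
  have hdet : (1 + W * R).det = W.det * (W⁻¹ + R).det := by
    rw [← det_mul, mul_add, mul_nonsing_inv _ (isUnit_iff_ne_zero.2 hW.det_pos.ne')]
  rw [mutualInfo, hdet, ← haW, ← hbS]
  simp only [RCLike.ofReal_eq_complex_ofReal, ← Complex.ofReal_mul, Complex.ofReal_re]
  exact Real.log_mul ha.ne' hb.ne'

theorem mutualInfo_lt_mutualInfo_iff (hW : W.PosDef) {R R' : Matrix (Fin m) (Fin m) ℂ}
    (hR : R.PosSemidef) (hR' : R'.PosSemidef) :
    mutualInfo W R < mutualInfo W R' ↔ (W⁻¹ + R).det.re < (W⁻¹ + R').det.re := by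
  rw [mutualInfo_eq hW hR, mutualInfo_eq hW hR', add_lt_add_iff_left,
    Real.log_lt_log_iff (hW.inv.add_posSemidef hR).det_pos.1
      (hW.inv.add_posSemidef hR').det_pos.1]

theorem re_det_inv_add_le_of_mem_jointSet (hW : W.PosDef) {PT P : ℝ}
    {R : Matrix (Fin m) (Fin m) ℂ} (hR : R ∈ jointSet m PT P) :
    (W⁻¹ + R).det.re ≤ (W⁻¹ + ((P : ℂ) • 1 - offDiag W⁻¹)).det.re := by
  have hWii : ∀ i, W⁻¹ i i + P = ((W⁻¹ i i).re + P : ℝ) := fun i => by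
    rw [Complex.ofReal_add]
    congr 1
    exact (hW.inv.1.coe_re_apply_self i).symm
  rw [add_smul_one_sub_offDiag, det_diagonal, Finset.prod_congr rfl fun i _ => hWii i,
    ← Complex.ofReal_prod, Complex.ofReal_re]
  have hS := hW.inv.add_posSemidef hR.1
  calc (W⁻¹ + R).det.re ≤ ∏ i, ((W⁻¹ + R) i i).re := hS.re_det_le_prod_diag
    _ ≤ ∏ i, ((W⁻¹ i i).re + P) :=
        Finset.prod_le_prod (fun i _ => hS.diag_pos.1.le) fun i _ => by simpa using hR.2.2 i

theorem inv_add_apply_eq_zero_of_isMaxOn (hW : W.PosDef) {PT P : ℝ} {R : Matrix (Fin m) (Fin m) ℂ}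
    (hR : R.PosDef) (hRS : R ∈ jointSet m PT P)
    (hmax : IsMaxOn (mutualInfo W) (jointSet m PT P) R) {i j : Fin m}
    (hij : i ≠ j) : (W⁻¹ + R)⁻¹ i j = 0 := by
  set S := W⁻¹ + R
  have hS : S.PosDef := hW.inv.add_posSemidef hR.posSemidef
  by_contra hz
  set z := S⁻¹ i j
  set Δ : Matrix (Fin m) (Fin m) ℂ := single i j z + single j i (star z)
  have hΔ : Δ.IsHermitian := by
    simp [Δ, IsHermitian, conjTranspose_single, add_comm]
  have hΔdiag : ∀ k, Δ k k = 0 := fun k => by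
    simp [Δ, show ¬(i = k ∧ j = k) from fun h => hij (h.1.trans h.2.symm),
      show ¬(j = k ∧ i = k) from fun h => hij (h.2.trans h.1.symm)]
  have htrace : (S⁻¹ * Δ).trace = (2 * Complex.normSq z : ℝ) := by
    rw [mul_add, trace_add, trace_mul_single, trace_mul_single, ← hS.inv.1.apply j i]
    simp only [op_smul_eq_mul, Complex.star_def]
    rw [mul_comm, Complex.mul_conj]
    push_cast
    ring
  obtain ⟨d, hd, hdS⟩ := RCLike.pos_iff_exists_ofReal.mp hS.det_pos
  have hgrow : 0 < RCLike.re (S.det * (S⁻¹ * Δ).trace) := by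
    rw [htrace, ← hdS]
    simpa using mul_pos hd (mul_pos two_pos (Complex.normSq_pos.2 hz))
  obtain ⟨t, hpsd, hdet⟩ := ((hR.eventually_posSemidef_add_smul hΔ).and
    (eventually_re_det_lt_re_det_add_smul (isUnit_iff_ne_zero.2 hS.det_pos.ne') hgrow)).exists
  have hmem : R + (t : ℂ) • Δ ∈ jointSet m PT P :=
    mem_jointSet_of_diag_eq hRS hpsd fun k => by simp [hΔdiag]
  refine (isMaxOn_iff.1 hmax _ hmem).not_gt
    ((mutualInfo_lt_mutualInfo_iff hW hR.posSemidef hpsd).2 ?_)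
  simpa [S, add_assoc] using hdet

theorem posDef_smul_one_sub_offDiag_of_isMaxOn (hW : W.PosDef) {PT P : ℝ}
    {R : Matrix (Fin m) (Fin m) ℂ} (hR : R.PosDef) (hRS : R ∈ jointSet m PT P)
    (hmax : IsMaxOn (mutualInfo W) (jointSet m PT P) R) :
    ((P : ℂ) • 1 - offDiag W⁻¹).PosDef := by
  have hS := hW.inv.add_posSemidef hR.posSemidef
  have hSinv : (W⁻¹ + R)⁻¹.IsDiag := fun i j hij =>
    inv_add_apply_eq_zero_of_isMaxOn hW hR hRS hmax hij
  have hSdiag : (W⁻¹ + R).IsDiag := by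
    simpa [nonsing_inv_nonsing_inv _ (isUnit_iff_ne_zero.2 hS.det_pos.ne')] using hSinv.inv
  rw [smul_one_sub_offDiag_eq_of_isDiag hSdiag]
  refine PosDef.posSemidef_add (PosSemidef.diagonal fun i => ?_) hR
  exact sub_nonneg.2 (Complex.le_def.2
    ⟨by simpa using hRS.2.2 i, by simpa using (RCLike.pos_iff.mp hR.diag_pos).2⟩)

end

theorem stmt8_general (m : ℕ) (hm : 1 ≤ m) (W : Matrix (Fin m) (Fin m) ℂ) (hW : W.PosDef)
    (P PT : ℝ) (hD : (offDiag (W⁻¹)).IsHermitian) :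
    ((∃ R, R.PosDef ∧ R ∈ jointSet m PT P ∧
        ∀ R' ∈ jointSet m PT P, mutualInfo W R' ≤ mutualInfo W R) →
      lamMax hD < P ∧ ((P : ℂ) • (1 : Matrix (Fin m) (Fin m) ℂ) - offDiag W⁻¹).PosDef) ∧
    ((m : ℝ) * P ≤ PT → lamMax hD < P →
      ((P : ℂ) • (1 : Matrix (Fin m) (Fin m) ℂ) - offDiag W⁻¹).PosDef ∧
      (P : ℂ) • (1 : Matrix (Fin m) (Fin m) ℂ) - offDiag W⁻¹ ∈ jointSet m PT P ∧
      ∀ R ∈ jointSet m PT P,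
        mutualInfo W R ≤ mutualInfo W ((P : ℂ) • (1 : Matrix (Fin m) (Fin m) ℂ) - offDiag W⁻¹)) := by
  have : NeZero m := ⟨by omega⟩
  refine ⟨fun ⟨R, hR, hRS, hmax⟩ => ?_, fun hmP hlam => ?_⟩
  · have hpos := posDef_smul_one_sub_offDiag_of_isMaxOn hW hR hRS (isMaxOn_iff.2 hmax)
    exact ⟨(posDef_smul_one_sub_iff_lamMax_lt hD P).1 hpos, hpos⟩
  · have hpos := (posDef_smul_one_sub_iff_lamMax_lt hD P).2 hlam
    have hmem := smul_one_sub_offDiag_mem_jointSet hpos.posSemidef hmP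
    refine ⟨hpos, hmem, fun R hR => ?_⟩
    exact (le_iff_le_iff_lt_iff_lt.2 (mutualInfo_lt_mutualInfo_iff hW hmem.1 hR.1)).2
      (re_det_inv_add_le_of_mem_jointSet hW hR)

/-- Necessity of `λ_max(D̄(W⁻¹)) < P` (equivalently, positive definiteness of
`P·I − D̄(W⁻¹)`) for a positive definite maximizer to exist, and its sufficiency
when `m·P ≤ P_T`, in which case `R* = P·I − D̄(W⁻¹)` is a maximizer. -/
theorem stmt8 (m : ℕ) (hm : 1 ≤ m) (W : Matrix (Fin m) (Fin m) ℂ) (hW : W.PosDef)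
    (P PT : ℝ) (hP : 0 < P) (hPT : 0 < PT)
    (hD : (offDiag (W⁻¹)).IsHermitian) :
    ((∃ R, R.PosDef ∧ R ∈ jointSet m PT P ∧
        ∀ R' ∈ jointSet m PT P, mutualInfo W R' ≤ mutualInfo W R) →
      lamMax hD < P ∧ ((P : ℂ) • (1 : Matrix (Fin m) (Fin m) ℂ) - offDiag W⁻¹).PosDef) ∧
    ((m : ℝ) * P ≤ PT → lamMax hD < P →
      ((P : ℂ) • (1 : Matrix (Fin m) (Fin m) ℂ) - offDiag W⁻¹).PosDef ∧
      (P : ℂ) • (1 : Matrix (Fin m) (Fin m) ℂ) - offDiag W⁻¹ ∈ jointSet m PT P ∧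
      ∀ R ∈ jointSet m PT P,
        mutualInfo W R ≤ mutualInfo W ((P : ℂ) • (1 : Matrix (Fin m) (Fin m) ℂ) - offDiag W⁻¹)) :=
  stmt8_general m hm W hW P PT hD
end

section
/- Let W be an m×m complex Hermitian positive definite matrix. For every ε > 0 there exists M > 0 such that for all P, P_T > 0 with P* := min(P, P_T/m) ≥ M, one has |C_joint(P_T, P) − log det(W) − m·log P*| ≤ ε; i.e., at high SNR the isotropic covariance P*·I is asymptotically optimal under the joint total and per-antenna power constraints. -/
open Matrix ComplexOrder

noncomputable def Cjoint (m : ℕ) (W : Matrix (Fin m) (Fin m) ℂ) (PT P : ℝ) : ℝ :=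
  sSup (mutualInfo W '' jointSet m PT P)

/-! Since `det (1 + W R) = det W · det (W⁻¹ + R)`, AM–GM on the eigenvalues of `W⁻¹ + R` gives
`det (W⁻¹ + R) ≤ ((tr W⁻¹ + tr R) / m) ^ m`, and both power constraints force `tr R ≤ m P*`.
The isotropic matrix `P* • 1` is admissible and `det (W⁻¹ + P* • 1) ≥ P* ^ m`. Hence `C_joint` lies
between `log det W + m log P*` and `log det W + m log (P* + tr W⁻¹ / m)`, and these differ by at
most `tr W⁻¹ / P*`. -/

open Finset

theorem Real.prod_le_sum_div_card_pow {ι : Type*} (s : Finset ι) (f : ι → ℝ)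
    (hf : ∀ i ∈ s, 0 ≤ f i) : ∏ i ∈ s, f i ≤ ((∑ i ∈ s, f i) / #s) ^ #s := by
  rcases s.eq_empty_or_nonempty with rfl | hs
  · simp
  have hn : (0 : ℝ) < #s := by exact_mod_cast hs.card_pos
  have hprod : 0 ≤ ∏ i ∈ s, f i := prod_nonneg hf
  calc ∏ i ∈ s, f i = ((∏ i ∈ s, f i) ^ (#s : ℝ)⁻¹) ^ #s :=
        (Real.rpow_inv_natCast_pow hprod hs.card_pos.ne').symm
    _ = (∏ i ∈ s, f i ^ (#s : ℝ)⁻¹) ^ #s := by rw [Real.finsetProd_rpow s f hf]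
    _ ≤ (∑ i ∈ s, (#s : ℝ)⁻¹ * f i) ^ #s := by
        gcongr
        · exact prod_nonneg fun i hi => Real.rpow_nonneg (hf i hi) _
        · exact Real.geom_mean_le_arith_mean_weighted s _ f (fun _ _ => by positivity)
            (by simp [hn.ne']) hf
    _ = ((∑ i ∈ s, f i) / #s) ^ #s := by rw [← mul_sum, inv_mul_eq_div]

namespace Matrix

variable {n 𝕜 : Type*} [Fintype n] [DecidableEq n] [RCLike 𝕜] {A : Matrix n n 𝕜}

theorem IsHermitian.re_trace_eq_sum_eigenvalues (hA : A.IsHermitian) :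
    RCLike.re A.trace = ∑ i, hA.eigenvalues i := by
  simp [hA.trace_eq_sum_eigenvalues]

theorem IsHermitian.re_det_eq_prod_eigenvalues (hA : A.IsHermitian) :
    RCLike.re A.det = ∏ i, hA.eigenvalues i := by
  rw [hA.det_eq_prod_eigenvalues, ← RCLike.ofReal_prod, RCLike.ofReal_re]

theorem IsHermitian.det_add_smul_one (hA : A.IsHermitian) (t : ℝ) :
    (A + (t : 𝕜) • 1).det = ∏ i, ((hA.eigenvalues i + t : ℝ) : 𝕜) := by
  have h : A + (t : 𝕜) • 1 = -(scalar n (-(t : 𝕜)) - A) := by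
    rw [neg_sub, scalar_apply, smul_one_eq_diagonal]
    simp [sub_eq_add_neg]
  rw [h, det_neg, ← eval_charpoly, hA.charpoly_eq, Polynomial.eval_prod, ← card_univ, ← prod_const,
    ← prod_mul_distrib]
  refine prod_congr rfl fun i _ => ?_
  simp only [Polynomial.eval_sub, Polynomial.eval_X, Polynomial.eval_C, RCLike.ofReal_add]
  ring

theorem PosSemidef.pow_le_re_det_add_smul_one (hA : A.PosSemidef) {t : ℝ} (ht : 0 ≤ t) :
    t ^ Fintype.card n ≤ RCLike.re (A + (t : 𝕜) • 1).det := by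
  rw [hA.1.det_add_smul_one, ← RCLike.ofReal_prod, RCLike.ofReal_re, ← card_univ, ← prod_const]
  exact prod_le_prod (fun _ _ => ht) fun i _ => le_add_of_nonneg_left (hA.eigenvalues_nonneg i)

theorem PosSemidef.re_det_le_re_trace_div_pow (hA : A.PosSemidef) :
    RCLike.re A.det ≤ (RCLike.re A.trace / Fintype.card n) ^ Fintype.card n := by
  rw [hA.1.re_det_eq_prod_eigenvalues, hA.1.re_trace_eq_sum_eigenvalues, ← card_univ]
  exact Real.prod_le_sum_div_card_pow _ _ fun i _ => hA.eigenvalues_nonneg i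

theorem det_one_add_mul_of_isUnit {R : Type*} [CommRing R] {W : Matrix n n R} (hW : IsUnit W.det)
    (X : Matrix n n R) : (1 + W * X).det = W.det * (W⁻¹ + X).det := by
  rw [← det_mul, Matrix.mul_add, mul_nonsing_inv _ hW]

end Matrix

variable {m : ℕ} {W R : Matrix (Fin m) (Fin m) ℂ} {PT P : ℝ}

theorem re_trace_le_of_mem_jointSet (hm : m ≠ 0) (hR : R ∈ jointSet m PT P) :
    R.trace.re ≤ m * min P (PT / m) := by
  obtain ⟨-, hRT, hRdiag⟩ := hR
  rw [mul_min_of_nonneg _ _ (Nat.cast_nonneg m), mul_div_cancel₀ _ (Nat.cast_ne_zero.mpr hm)]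
  refine le_min ?_ hRT
  calc R.trace.re = ∑ i, (R i i).re := Complex.re_sum _ _
    _ ≤ ∑ _i : Fin m, P := sum_le_sum fun i _ => hRdiag i
    _ = m * P := by simp

theorem smul_one_mem_jointSet {t : ℝ} (ht : 0 ≤ t) (htP : t ≤ P) (htPT : m * t ≤ PT) :
    (t : ℂ) • (1 : Matrix (Fin m) (Fin m) ℂ) ∈ jointSet m PT P := by
  refine ⟨PosSemidef.one.smul (by exact_mod_cast ht), ?_, fun i => by simpa using htP⟩
  simpa [mul_comm] using htPT

theorem mutualInfo_eq_log_det_add_log_det_inv_add (hW : W.PosDef) (hR : R.PosSemidef) :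
    mutualInfo W R = Real.log W.det.re + Real.log (W⁻¹ + R).det.re := by
  obtain ⟨hW_re, hW_im⟩ := Complex.pos_iff.mp hW.det_pos
  have hS_re := (Complex.pos_iff.mp (hW.inv.add_posSemidef hR).det_pos).1
  rw [mutualInfo, det_one_add_mul_of_isUnit hW.det_pos.ne'.isUnit, Complex.mul_re, ← hW_im,
    zero_mul, sub_zero, Real.log_mul hW_re.ne' hS_re.ne']

theorem mutualInfo_le_of_mem_jointSet (hm : m ≠ 0) (hW : W.PosDef) (hR : R ∈ jointSet m PT P) :
    mutualInfo W R ≤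
      Real.log W.det.re + m * Real.log ((W⁻¹).trace.re / m + min P (PT / m)) := by
  have hS := hW.inv.add_posSemidef hR.1
  rw [mutualInfo_eq_log_det_add_log_det_inv_add hW hR.1, ← Real.log_pow]
  gcongr
  · exact (Complex.pos_iff.mp hS.det_pos).1
  calc (W⁻¹ + R).det.re ≤ ((W⁻¹ + R).trace.re / m) ^ m := by
        simpa using hS.posSemidef.re_det_le_re_trace_div_pow
    _ ≤ ((W⁻¹).trace.re / m + min P (PT / m)) ^ m := by
        gcongr
        · exact div_nonneg (RCLike.nonneg_iff.mp hS.posSemidef.trace_nonneg).1 (Nat.cast_nonneg m)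
        rw [trace_add, Complex.add_re, add_div]
        gcongr
        exact (div_le_iff₀' (by positivity)).mpr (re_trace_le_of_mem_jointSet hm hR)

theorem log_det_add_mul_log_le_mutualInfo_smul_one (hW : W.PosDef) {t : ℝ} (ht : 0 < t) :
    Real.log W.det.re + m * Real.log t ≤ mutualInfo W ((t : ℂ) • 1) := by
  have hR : ((t : ℂ) • 1 : Matrix (Fin m) (Fin m) ℂ).PosSemidef :=
    PosSemidef.one.smul (by exact_mod_cast ht.le)
  rw [mutualInfo_eq_log_det_add_log_det_inv_add hW hR, ← Real.log_pow]
  gcongr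
  simpa using hW.inv.posSemidef.pow_le_re_det_add_smul_one ht.le

theorem mul_log_add_div_sub_mul_log_le {n c t : ℝ} (hn : 0 < n) (hc : 0 ≤ c) (ht : 0 < t) :
    n * Real.log (c / n + t) - n * Real.log t ≤ c / t := by
  have h := Real.log_le_sub_one_of_pos (by positivity : 0 < (c / n + t) / t)
  rw [Real.log_div (by positivity) ht.ne'] at h
  calc n * Real.log (c / n + t) - n * Real.log t
        = n * (Real.log (c / n + t) - Real.log t) := by ring
    _ ≤ n * ((c / n + t) / t - 1) := by gcongr
    _ = c / t := by field_simp; ring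

theorem zero_mem_jointSet (hP : 0 ≤ P) (hPT : 0 ≤ PT) : 0 ∈ jointSet m PT P :=
  ⟨PosSemidef.zero, by simpa using hPT, fun _ => by simpa using hP⟩

theorem Cjoint_le (hm : m ≠ 0) (hW : W.PosDef) (hP : 0 ≤ P) (hPT : 0 ≤ PT) :
    Cjoint m W PT P ≤
      Real.log W.det.re + m * Real.log ((W⁻¹).trace.re / m + min P (PT / m)) :=
  csSup_le ⟨_, Set.mem_image_of_mem _ (zero_mem_jointSet hP hPT)⟩
    (Set.forall_mem_image.2 fun _ hR => mutualInfo_le_of_mem_jointSet hm hW hR)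

theorem le_Cjoint (hm : m ≠ 0) (hW : W.PosDef) (ht : 0 < min P (PT / m)) :
    Real.log W.det.re + m * Real.log (min P (PT / m)) ≤ Cjoint m W PT P := by
  have hmem : ((min P (PT / m) : ℝ) : ℂ) • 1 ∈ jointSet m PT P := by
    refine smul_one_mem_jointSet ht.le (min_le_left _ _) ?_
    calc m * min P (PT / m) ≤ m * (PT / m) := by gcongr; exact min_le_right _ _
      _ = PT := mul_div_cancel₀ _ (Nat.cast_ne_zero.mpr hm)
  have hbdd : BddAbove (mutualInfo W '' jointSet m PT P) :=
    ⟨_, Set.forall_mem_image.2 fun _ hR => mutualInfo_le_of_mem_jointSet hm hW hR⟩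
  exact (log_det_add_mul_log_le_mutualInfo_smul_one hW ht).trans
    (le_csSup hbdd (Set.mem_image_of_mem _ hmem))

/-- High-SNR optimality of isotropic signaling under the joint constraints: with
`P* = min(P, P_T/m)`, `C_joint(P_T, P) ≈ log det W + m·log P*` when `P*` is large. -/
theorem stmt16 (m : ℕ) (hm : 1 ≤ m) (W : Matrix (Fin m) (Fin m) ℂ) (hW : W.PosDef) :
    ∀ ε : ℝ, 0 < ε → ∃ M : ℝ, 0 < M ∧ ∀ P PT : ℝ, 0 < P → 0 < PT →
      M ≤ min P (PT / m) →
      |Cjoint m W PT P - Real.log W.det.re - m * Real.log (min P (PT / m))| ≤ ε := by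
  intro ε hε
  have hm0 : m ≠ 0 := Nat.one_le_iff_ne_zero.mp hm
  set c := (W⁻¹).trace.re
  have hc : 0 ≤ c := (Complex.nonneg_iff.mp hW.inv.posSemidef.trace_nonneg).1
  refine ⟨max 1 (c / ε), by positivity, fun P PT hP hPT hM => ?_⟩
  set t := min P (PT / m)
  have ht : 0 < t := (by positivity : (0 : ℝ) < max 1 (c / ε)).trans_le hM
  have hct : c / t ≤ ε := (div_le_iff₀ ht).mpr ((div_le_iff₀' hε).mp ((le_max_right _ _).trans hM))
  have hgap := mul_log_add_div_sub_mul_log_le (by positivity : (0 : ℝ) < m) hc ht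
  have hlow := le_Cjoint hm0 hW ht
  have hup := Cjoint_le hm0 hW hP.le hPT.le
  rw [abs_le]
  constructor <;> linarith
end
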